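/- arXiv:1501.05106 — 2 statements merged into one kernel-verified Lean document; each statement's English description precedes it below -/
import Mathlib

section
/- Fix coprime positive integers p, q, and positive integers d, r, s with s ≥ r. Let u_1,…,u_{d+2r} be distinct points of the punctured unit disk. The product g(z) = ℓ_{u_1, s−r}(z) · ∏_{j=2}^{d+r} ℓ_{u_j}(z) · ∏_{j=d+r+1}^{d+2r} ℓ̄_{u_j}(z) is a strongly polar weighted homogeneous mixed polynomial with weight (p,q), polar degree dpq, and radial degree (d+2s)pq. -/
/-
Each `ℓ_{u,k}` is strongly polar weighted homogeneous of radial degree `(1+2k)pq` and polar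
degree `pq` (on `|η| = 1`, `η̄ = η⁻¹`), each `ℓ̄_u` has radial degree `pq` and polar degree `-pq`,
and both degrees add under products. With one `ℓ_{u,s-r}`, `d+r-1` factors `ℓ_u` and `r` factors
`ℓ̄_u`, the degrees are `(d+2s)pq` and `dpq`.
-/

open Complex Finset

/-- `α_{u,k} = (1−r²)^{q(1/2+k)} / (r^{p(1+2k)} e^{iθ})` for `u = re^{iθ}`. -/
noncomputable def alphauk (p q : ℕ) (u : ℂ) (k : ℕ) : ℂ :=
  (((1 - ‖u‖ ^ 2) ^ ((q : ℝ) * (1 / 2 + k)) : ℝ) : ℂ) /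
    (((‖u‖ : ℝ) : ℂ) ^ (p * (1 + 2 * k)) *
      Complex.exp ((Complex.arg u : ℝ) * Complex.I))

/-- `ℓ_{u,k}(z) = z₁^{q(1+k)} z̄₁^{qk} − α_{u,k} z₂^{p(1+k)} z̄₂^{pk}`. -/
noncomputable def elluk (p q : ℕ) (u : ℂ) (k : ℕ) (z : ℂ × ℂ) : ℂ :=
  z.1 ^ (q * (1 + k)) * (starRingEnd ℂ) z.1 ^ (q * k) -
    alphauk p q u k * (z.2 ^ (p * (1 + k)) * (starRingEnd ℂ) z.2 ^ (p * k))

/-- The conjugate polynomial `ℓ̄_u(z) = z̄₁^q − ᾱ_{u,0} z̄₂^p`. -/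
noncomputable def ellbar (p q : ℕ) (u : ℂ) (z : ℂ × ℂ) : ℂ :=
  (starRingEnd ℂ) z.1 ^ q - (starRingEnd ℂ) (alphauk p q u 0) * (starRingEnd ℂ) z.2 ^ p

def polarWeightedSMul (p q : ℕ) (R : ℝ) (η : ℂ) (z : ℂ × ℂ) : ℂ × ℂ :=
  ((R : ℂ) ^ p * η ^ p * z.1, (R : ℂ) ^ q * η ^ q * z.2)

def IsPolarWeightedHomogeneous (p q a : ℕ) (b : ℤ) (f : ℂ × ℂ → ℂ) : Prop :=
  ∀ R : ℝ, 0 < R → ∀ η : ℂ, ‖η‖ = 1 → ∀ z : ℂ × ℂ,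
    f (polarWeightedSMul p q R η z) = (R : ℂ) ^ a * η ^ b * f z

namespace IsPolarWeightedHomogeneous

variable {p q : ℕ}

theorem one : IsPolarWeightedHomogeneous p q 0 0 fun _ => 1 := by
  intro R _ η _ z
  simp

theorem mul {a a' : ℕ} {b b' : ℤ} {f g : ℂ × ℂ → ℂ}
    (hf : IsPolarWeightedHomogeneous p q a b f) (hg : IsPolarWeightedHomogeneous p q a' b' g) :
    IsPolarWeightedHomogeneous p q (a + a') (b + b') fun z => f z * g z := by
  intro R hR η hη z
  have hη0 : η ≠ 0 := ne_zero_of_norm_ne_zero (hη ▸ one_ne_zero)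
  dsimp only
  rw [hf R hR η hη z, hg R hR η hη z, pow_add, zpow_add₀ hη0]
  ring

theorem prod {ι : Type*} {s : Finset ι} {a : ι → ℕ} {b : ι → ℤ} {f : ι → ℂ × ℂ → ℂ}
    (hf : ∀ i ∈ s, IsPolarWeightedHomogeneous p q (a i) (b i) (f i)) :
    IsPolarWeightedHomogeneous p q (∑ i ∈ s, a i) (∑ i ∈ s, b i)
      fun z => ∏ i ∈ s, f i z := by
  classical
  induction s using Finset.induction_on with
  | empty => simpa using one
  | insert i s hi ih =>
    simp only [sum_insert hi, prod_insert hi]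
    exact (hf i (mem_insert_self i s)).mul (ih fun j hj => hf j (mem_insert_of_mem hj))

end IsPolarWeightedHomogeneous

section

variable (p q : ℕ)

theorem isPolarWeightedHomogeneous_elluk (u : ℂ) (k : ℕ) :
    IsPolarWeightedHomogeneous p q (p * q * (1 + 2 * k)) (p * q : ℕ) (elluk p q u k) := by
  intro R _ η hη z
  have hη0 : η ≠ 0 := ne_zero_of_norm_ne_zero (hη ▸ one_ne_zero)
  have hconj : (starRingEnd ℂ) η = η⁻¹ := (inv_eq_conj hη).symm
  simp only [polarWeightedSMul, elluk, mul_pow, map_mul, map_pow, conj_ofReal, hconj, inv_pow]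
  rw [zpow_natCast]
  field_simp
  ring

theorem isPolarWeightedHomogeneous_ellbar (u : ℂ) :
    IsPolarWeightedHomogeneous p q (p * q) (-(p * q : ℕ)) (ellbar p q u) := by
  intro R _ η hη z
  have hη0 : η ≠ 0 := ne_zero_of_norm_ne_zero (hη ▸ one_ne_zero)
  have hconj : (starRingEnd ℂ) η = η⁻¹ := (inv_eq_conj hη).symm
  simp only [polarWeightedSMul, ellbar, mul_pow, map_mul, map_pow, conj_ofReal, hconj, inv_pow]
  rw [zpow_neg, zpow_natCast]
  field_simp
  ring

end

theorem stmt10_general (p q : ℕ)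
    (d r s : ℕ) (hd : 0 < d) (hs : r ≤ s)
    (u : ℕ → ℂ) :
    ∀ (R : ℝ), 0 < R → ∀ η : ℂ, ‖η‖ = 1 → ∀ z : ℂ × ℂ,
      (fun w : ℂ × ℂ =>
          elluk p q (u 0) (s - r) w *
            (∏ j ∈ Finset.Ico 1 (d + r), elluk p q (u j) 0 w) *
            ∏ j ∈ Finset.Ico (d + r) (d + 2 * r), ellbar p q (u j) w)
        ((R : ℂ) ^ p * η ^ p * z.1, (R : ℂ) ^ q * η ^ q * z.2) =
      (R : ℂ) ^ ((d + 2 * s) * p * q) * η ^ (d * p * q) *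
        (fun w : ℂ × ℂ =>
          elluk p q (u 0) (s - r) w *
            (∏ j ∈ Finset.Ico 1 (d + r), elluk p q (u j) 0 w) *
            ∏ j ∈ Finset.Ico (d + r) (d + 2 * r), ellbar p q (u j) w) z := by
  have hg : IsPolarWeightedHomogeneous p q ((d + 2 * s) * p * q) (d * p * q : ℕ) fun w =>
      elluk p q (u 0) (s - r) w * (∏ j ∈ Ico 1 (d + r), elluk p q (u j) 0 w) *
        ∏ j ∈ Ico (d + r) (d + 2 * r), ellbar p q (u j) w := by
    convert ((isPolarWeightedHomogeneous_elluk p q (u 0) (s - r)).mul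
      (IsPolarWeightedHomogeneous.prod (s := Ico 1 (d + r))
        fun j _ => isPolarWeightedHomogeneous_elluk p q (u j) 0)).mul
      (IsPolarWeightedHomogeneous.prod (s := Ico (d + r) (d + 2 * r))
        fun j _ => isPolarWeightedHomogeneous_ellbar p q (u j)) using 1
    all_goals
      obtain ⟨t, rfl⟩ := Nat.exists_eq_add_of_le hs
      obtain ⟨e, rfl⟩ := Nat.exists_eq_add_of_lt hd
      simp only [sum_const, Nat.card_Ico, smul_eq_mul, show r + t - r = t by omega,
        show 0 + e + 1 + r - 1 = e + r by omega,
        show 0 + e + 1 + 2 * r - (0 + e + 1 + r) = r by omega]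
      push_cast
      ring
  intro R hR η hη z
  simpa only [polarWeightedSMul, zpow_natCast] using hg R hR η hη z

/-- The product `g = ℓ_{u₁,s−r} · ∏_{j=2}^{d+r} ℓ_{u_j} · ∏_{j=d+r+1}^{d+2r} ℓ̄_{u_j}`
is strongly polar weighted homogeneous of weight `(p,q)`, polar degree `dpq`
and radial degree `(d+2s)pq`, i.e. it satisfies the corresponding functional
equation `g((R,η)∘z) = R^{(d+2s)pq} η^{dpq} g(z)`. -/
theorem stmt10 (p q : ℕ) (hp : 0 < p) (hq : 0 < q) (hpq : Nat.Coprime p q)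
    (d r s : ℕ) (hd : 0 < d) (hr : 0 < r) (hs : r ≤ s)
    (u : ℕ → ℂ)
    (hu : ∀ j < d + 2 * r, 0 < ‖u j‖ ∧ ‖u j‖ < 1)
    (hdist : ∀ i < d + 2 * r, ∀ j < d + 2 * r, i ≠ j → u i ≠ u j) :
    ∀ (R : ℝ), 0 < R → ∀ η : ℂ, ‖η‖ = 1 → ∀ z : ℂ × ℂ,
      (fun w : ℂ × ℂ =>
          elluk p q (u 0) (s - r) w *
            (∏ j ∈ Finset.Ico 1 (d + r), elluk p q (u j) 0 w) *
            ∏ j ∈ Finset.Ico (d + r) (d + 2 * r), ellbar p q (u j) w)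
        ((R : ℂ) ^ p * η ^ p * z.1, (R : ℂ) ^ q * η ^ q * z.2) =
      (R : ℂ) ^ ((d + 2 * s) * p * q) * η ^ (d * p * q) *
        (fun w : ℂ × ℂ =>
          elluk p q (u 0) (s - r) w *
            (∏ j ∈ Finset.Ico 1 (d + r), elluk p q (u j) 0 w) *
            ∏ j ∈ Finset.Ico (d + r) (d + 2 * r), ellbar p q (u j) w) z :=
  stmt10_general p q d r s hd hs u
end

section
/- Fix coprime positive integers p, q and d ≥ 1. The link of the holomorphic polynomial f(z) = z_1^{qd} − z_2^{pd} on S³, i.e. L = {z ∈ S³ : z_1^{qd} = z_2^{pd}}, is the disjoint union of exactly d regular orbits of the S¹-action ρ∘(z_1,z_2) = (ρ^p z_1, ρ^q z_2); namely L = ⋃_{j=0}^{d−1} K(u_j) where the u_j are the d distinct d-th roots determining z_2^p/z_1^q. -/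
open Complex

/-- The regular orbit `K(u)` for `u = r e^{iθ}`, `0 < r < 1`. -/
noncomputable def Korbit (p q : ℕ) (r θ : ℝ) : Set (ℂ × ℂ) :=
  {z | ∃ ρ : ℂ, ‖ρ‖ = 1 ∧
    z = (ρ ^ p * (Real.sqrt (1 - r ^ 2) : ℂ),
         ρ ^ q * (r : ℂ) * Complex.exp ((θ / p : ℝ) * Complex.I))}

/-- `K(u)` in terms of the punctured-disk coordinate `u`. -/
noncomputable def KorbitU (p q : ℕ) (u : ℂ) : Set (ℂ × ℂ) :=
  Korbit p q (‖u‖) (Complex.arg u)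

/-!
Since `p` and `q` are coprime, the orbit of a point `(x₁, x₂)` with nonzero coordinates under
`ρ ↦ (ρ^p x₁, ρ^q x₂)` is cut out by the two moduli and the single equation
`z₂^p x₁^q = z₁^q x₂^p`, because every solution `(c₁, c₂)` of `c₂^p = c₁^q`, here
`(z₁/x₁, z₂/x₂)`, is of the form `(ρ^p, ρ^q)`.
On the link, `‖z₁‖^q = ‖z₂‖^p` and `‖z₁‖² + ‖z₂‖² = 1` force `‖z₂‖` to be the unique root
`r ∈ (0, 1)` of `√(1 - r²)^q = r^p`, and `(z₂^p / z₁^q)^d = 1` gives `z₂^p = ζ^j z₁^q` for a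
primitive `d`-th root of unity `ζ` and a unique `j < d`. For `u = r ζ^j` these are exactly the
equations of `K(u)`.
-/

open Set

variable {p q : ℕ}

def circleOrbit (p q : ℕ) (x : ℂ × ℂ) : Set (ℂ × ℂ) :=
  {z | ∃ ρ : ℂ, ‖ρ‖ = 1 ∧ z = (ρ ^ p * x.1, ρ ^ q * x.2)}

theorem mem_circleOrbit_iff (hpq : p.Coprime q) {x : ℂ × ℂ} (hx₁ : x.1 ≠ 0) (hx₂ : x.2 ≠ 0)
    {z : ℂ × ℂ} :
    z ∈ circleOrbit p q x ↔
      ‖z.1‖ = ‖x.1‖ ∧ ‖z.2‖ = ‖x.2‖ ∧ z.2 ^ p * x.1 ^ q = z.1 ^ q * x.2 ^ p := by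
  constructor
  · rintro ⟨ρ, hρ, rfl⟩
    simp only [norm_mul, norm_pow, hρ, one_pow, one_mul, true_and]
    ring
  · rintro ⟨h₁, h₂, h⟩
    have hpow : (z.2 / x.2) ^ p = (z.1 / x.1) ^ q := by
      rw [div_pow, div_pow, div_eq_div_iff (pow_ne_zero _ hx₂) (pow_ne_zero _ hx₁), h]
    obtain ⟨ρ, hρ₂, hρ₁⟩ := (pow_eq_pow_iff_of_coprime hpq).1 hpow
    have hnorm_div {a b : ℂ} (hb : b ≠ 0) (h : ‖a‖ = ‖b‖) : ‖a / b‖ = 1 := by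
      rw [norm_div, h, div_self (norm_ne_zero_iff.2 hb)]
    have hρ : ‖ρ‖ = 1 := (pow_eq_one_iff_of_coprime hpq).1
      ⟨by rw [← norm_pow, ← hρ₁, hnorm_div hx₁ h₁], by rw [← norm_pow, ← hρ₂, hnorm_div hx₂ h₂]⟩
    refine ⟨ρ, hρ, ?_⟩
    rw [← hρ₁, ← hρ₂, div_mul_cancel₀ _ hx₁, div_mul_cancel₀ _ hx₂]

theorem Korbit_eq_circleOrbit (r θ : ℝ) :
    Korbit p q r θ = circleOrbit p q (√(1 - r ^ 2), r * exp ((θ / p : ℝ) * I)) := by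
  simp only [Korbit, circleOrbit, mul_assoc]

theorem exp_arg_div_mul_I_pow (hp : p ≠ 0) {c : ℂ} (hc : ‖c‖ = 1) :
    exp ((arg c / p : ℝ) * I) ^ p = c := by
  calc exp ((arg c / p : ℝ) * I) ^ p = exp (arg c * I) := by
        rw [← exp_nat_mul]; push_cast; field_simp
    _ = c := by simpa [hc] using norm_mul_exp_arg_mul_I c

def IsLinkRadius (p q : ℕ) (r : ℝ) : Prop :=
  r ∈ Ioo 0 1 ∧ √(1 - r ^ 2) ^ q = r ^ p

theorem existsUnique_isLinkRadius (hp : p ≠ 0) (hq : q ≠ 0) : ∃! r, IsLinkRadius p q r := by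
  set f : ℝ → ℝ := fun r => √(1 - r ^ 2) ^ q - r ^ p
  have hanti : StrictAntiOn f (Icc 0 1) := by
    intro x hx y _ hxy
    have : √(1 - y ^ 2) ^ q ≤ √(1 - x ^ 2) ^ q :=
      pow_le_pow_left₀ (Real.sqrt_nonneg _) (Real.sqrt_le_sqrt (by nlinarith [hx.1])) q
    have : x ^ p < y ^ p := pow_lt_pow_left₀ hxy hx.1 hp
    simp only [f]
    linarith
  obtain ⟨r, hr, hfr⟩ : (0 : ℝ) ∈ f '' Ioo 0 1 :=
    intermediate_value_Ioo' zero_le_one (by fun_prop) ⟨by simp [f, hq], by simp [f, hp]⟩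
  refine ⟨r, ⟨hr, sub_eq_zero.1 hfr⟩, fun s ⟨hs, hfs⟩ => ?_⟩
  exact hanti.injOn (Ioo_subset_Icc_self hs) (Ioo_subset_Icc_self hr) (by simp [f, hfs, hfr])

theorem IsLinkRadius.sqrt_one_sub_sq_pos {r : ℝ} (hr : IsLinkRadius p q r) :
    0 < √(1 - r ^ 2) :=
  Real.sqrt_pos.2 (by nlinarith [hr.1.1, hr.1.2])

theorem mem_KorbitU_ofReal_mul_iff (hp : p ≠ 0) (hpq : p.Coprime q) {r : ℝ}
    (hr : IsLinkRadius p q r) {c : ℂ} (hc : ‖c‖ = 1) {z : ℂ × ℂ} :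
    z ∈ KorbitU p q (r * c) ↔ ‖z.1‖ = √(1 - r ^ 2) ∧ ‖z.2‖ = r ∧ z.2 ^ p = c * z.1 ^ q := by
  have hsqrt := hr.sqrt_one_sub_sq_pos
  obtain ⟨⟨hr₀, -⟩, hrq⟩ := hr
  have hrC : (r : ℂ) ≠ 0 := ofReal_ne_zero.2 hr₀.ne'
  have hnorm : ‖(r : ℂ) * c‖ = r := by
    rw [norm_mul, hc, mul_one, norm_real, Real.norm_of_nonneg hr₀.le]
  have hrqC : ((√(1 - r ^ 2) : ℝ) : ℂ) ^ q = (r : ℂ) ^ p := by exact_mod_cast hrq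
  rw [KorbitU, hnorm, arg_real_mul c hr₀, Korbit_eq_circleOrbit,
    mem_circleOrbit_iff hpq (ofReal_ne_zero.2 hsqrt.ne') (mul_ne_zero hrC (exp_ne_zero _))]
  simp only [norm_real, Real.norm_of_nonneg hsqrt.le, norm_mul, norm_exp_ofReal_mul_I, mul_one,
    Real.norm_of_nonneg hr₀.le, mul_pow, exp_arg_div_mul_I_pow hp hc, hrqC]
  rw [show z.1 ^ q * ((r : ℂ) ^ p * c) = c * z.1 ^ q * (r : ℂ) ^ p by ring,
    mul_left_inj' (pow_ne_zero p hrC)]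

theorem norm_fst_eq_sqrt_of_sq_add_sq {z : ℂ × ℂ} (hS : ‖z.1‖ ^ 2 + ‖z.2‖ ^ 2 = 1) :
    ‖z.1‖ = √(1 - ‖z.2‖ ^ 2) := by
  rw [← hS, add_sub_cancel_right, Real.sqrt_sq (norm_nonneg _)]

theorem isLinkRadius_norm_snd (hp : p ≠ 0) (hq : q ≠ 0) {d : ℕ} (hd : d ≠ 0) {z : ℂ × ℂ}
    (hS : ‖z.1‖ ^ 2 + ‖z.2‖ ^ 2 = 1) (h : z.1 ^ (q * d) = z.2 ^ (p * d)) :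
    IsLinkRadius p q ‖z.2‖ := by
  have hz₁ : z.1 ≠ 0 := by
    intro h0
    have : z.2 = 0 := by simpa [h0, hq, hd, hp, eq_comm] using h
    simp [h0, this] at hS
  have hz₂ : z.2 ≠ 0 := by
    intro h0
    have : z.1 = 0 := by simpa [h0, hq, hd, hp] using h
    simp [h0, this] at hS
  have hpow : ‖z.1‖ ^ q = ‖z.2‖ ^ p := by
    rw [← pow_left_inj₀ (by positivity) (by positivity) hd, ← pow_mul, ← pow_mul, ← norm_pow,
      ← norm_pow, h]
  have hlt : ‖z.2‖ < 1 := by nlinarith [norm_pos_iff.2 hz₁, norm_nonneg z.2]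
  exact ⟨⟨norm_pos_iff.2 hz₂, hlt⟩, norm_fst_eq_sqrt_of_sq_add_sq hS ▸ hpow⟩

theorem IsPrimitiveRoot.exists_eq_pow_mul_of_pow_eq_pow {K : Type*} [Field K] {d : ℕ} [NeZero d]
    {ζ : K} (hζ : IsPrimitiveRoot ζ d) {a b : K} (h : a ^ d = b ^ d) :
    ∃ j < d, b = ζ ^ j * a := by
  by_cases ha : a = 0
  · refine ⟨0, Nat.pos_of_neZero d, ?_⟩
    simpa [ha, NeZero.ne d, eq_comm] using h
  obtain ⟨j, hj, hζj⟩ := hζ.eq_pow_of_pow_eq_one (ξ := b / a)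
    (by rw [div_pow, ← h, div_self (pow_ne_zero _ ha)])
  exact ⟨j, hj, by rw [hζj, div_mul_cancel₀ _ ha]⟩

theorem mem_link_iff (hp : p ≠ 0) (hq : q ≠ 0) {d : ℕ} [NeZero d] {ζ : ℂ}
    (hζ : IsPrimitiveRoot ζ d) {r : ℝ} (hr : IsLinkRadius p q r)
    (hr_unique : ∀ s, IsLinkRadius p q s → s = r) {z : ℂ × ℂ} :
    ‖z.1‖ ^ 2 + ‖z.2‖ ^ 2 = 1 ∧ z.1 ^ (q * d) = z.2 ^ (p * d) ↔
      ∃ j : Fin d, ‖z.1‖ = √(1 - r ^ 2) ∧ ‖z.2‖ = r ∧ z.2 ^ p = ζ ^ (j : ℕ) * z.1 ^ q := by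
  constructor
  · rintro ⟨hS, h⟩
    obtain rfl := hr_unique _ (isLinkRadius_norm_snd hp hq (NeZero.ne d) hS h)
    obtain ⟨j, hj, hzj⟩ := hζ.exists_eq_pow_mul_of_pow_eq_pow (a := z.1 ^ q) (b := z.2 ^ p)
      (by rw [← pow_mul, ← pow_mul, h])
    exact ⟨⟨j, hj⟩, norm_fst_eq_sqrt_of_sq_add_sq hS, rfl, hzj⟩
  · rintro ⟨j, h₁, h₂, h⟩
    refine ⟨by rw [h₁, h₂, Real.sq_sqrt (by nlinarith [hr.1.1, hr.1.2])]; ring, ?_⟩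
    rw [pow_mul, pow_mul, h, mul_pow, ← pow_mul, pow_right_comm, hζ.pow_eq_one, one_pow, one_mul]

/-- The link of the holomorphic polynomial `z₁^{qd} − z₂^{pd}` on `S³` is the
disjoint union of exactly `d` regular orbits `K(u₀), …, K(u_{d−1})` of the
`S¹`-action `ρ∘(z₁,z₂) = (ρ^p z₁, ρ^q z₂)`, for `d` distinct points `u_j` of
the punctured unit disk. -/
theorem stmt15 (p q d : ℕ) (hp : 0 < p) (hq : 0 < q) (hpq : Nat.Coprime p q)
    (hd : 0 < d) :
    ∃ u : Fin d → ℂ, Function.Injective u ∧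
      (∀ j, 0 < ‖u j‖ ∧ ‖u j‖ < 1) ∧
      {z : ℂ × ℂ | ‖z.1‖ ^ 2 + ‖z.2‖ ^ 2 = 1 ∧
          z.1 ^ (q * d) = z.2 ^ (p * d)} = (⋃ j, KorbitU p q (u j)) ∧
      Pairwise (Function.onFun Disjoint fun j => KorbitU p q (u j)) := by
  obtain ⟨r, hr, hr_unique⟩ := existsUnique_isLinkRadius hp.ne' hq.ne'
  have : NeZero d := ⟨hd.ne'⟩
  obtain ⟨ζ, hζ⟩ : ∃ ζ : ℂ, IsPrimitiveRoot ζ d := ⟨_, isPrimitiveRoot_exp d hd.ne'⟩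
  have hK (j : Fin d) (z : ℂ × ℂ) := mem_KorbitU_ofReal_mul_iff hp.ne' hpq hr (z := z)
    (c := ζ ^ (j : ℕ)) (by rw [norm_pow, hζ.norm'_eq_one hd.ne', one_pow])
  have hζ_inj : Function.Injective fun j : Fin d => ζ ^ (j : ℕ) :=
    fun i j h => Fin.ext (hζ.pow_inj i.2 j.2 h)
  refine ⟨fun j => r * ζ ^ (j : ℕ),
    fun i j h => hζ_inj (mul_left_cancel₀ (ofReal_ne_zero.2 hr.1.1.ne') h), fun j => ?_, ?_,
    fun i j hij => ?_⟩
  · simpa [hζ.norm'_eq_one hd.ne', abs_of_pos hr.1.1] using hr.1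
  · ext z
    simp only [mem_ofPred_eq, mem_iUnion, hK]
    exact mem_link_iff hp.ne' hq.ne' hζ hr hr_unique
  · rw [Function.onFun, disjoint_left]
    rintro z hi hj
    rw [hK] at hi hj
    have hz₁ : z.1 ≠ 0 := norm_ne_zero_iff.1 (hi.1 ▸ hr.sqrt_one_sub_sq_pos.ne')
    exact hij (hζ_inj (mul_right_cancel₀ (pow_ne_zero q hz₁) (hi.2.2.symm.trans hj.2.2)))
end
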